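/- Let (X_i, Y_i), i = 1,2,..., be independent random vectors with common law P satisfying (G1'), let the kernels satisfy (G3) and the bandwidths satisfy (G4'). Then there exists a constant c > 0, depending only on K, such that P( p̂_{n,0}(x) p̂_{n,2}(x) − p̂_{n,1}(x)² ≥ b²c for all x ∈ S_X ) → 1 as n → ∞. -/

import Mathlib

open MeasureTheory ProbabilityTheory Filter Set Topology

noncomputable section

/-- Generalized inverse `F⁻(u) = inf { y : F y ≥ u }`. -/
def genInv (F : ℝ → ℝ) (u : ℝ) : ℝ := sInf {y : ℝ | u ≤ F y}

/-- The Hölder regularity class `C_{k+δ,M}(S)`: `k` times differentiable, all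
derivatives up to order `k` (including the function) bounded by `M`, and the
order-`k` derivative `δ`-Hölder with constant `M`. -/
def HClass {E : Type*} [NormedAddCommGroup E] [NormedSpace ℝ E]
    (k : ℕ) (δ M : ℝ) (S : Set E) (f : E → ℝ) : Prop :=
  ContDiffOn ℝ k f S ∧
  (∀ l : ℕ, l ≤ k → ∀ z ∈ S, ‖iteratedFDerivWithin ℝ l f S z‖ ≤ M) ∧
  ∀ z ∈ S, ∀ z' ∈ S,
    ‖iteratedFDerivWithin ℝ k f S z - iteratedFDerivWithin ℝ k f S z'‖ ≤ M * ‖z - z'‖ ^ δ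

/-- Basic kernel requirements of (G3): bounded, nonnegative, symmetric,
supported in `(-1,1)`, integrating to one. -/
def KernelBase (K : ℝ → ℝ) : Prop :=
  (∃ C, ∀ u, K u ≤ C) ∧ (∀ u, 0 ≤ K u) ∧ (∀ u, K (-u) = K u) ∧
  (∀ u, u ∉ Set.Ioo (-1 : ℝ) 1 → K u = 0) ∧ (∫ u, K u) = 1

/-- (G3) requirements on the kernel `L`. -/
def KernelCondL (L : ℝ → ℝ) : Prop :=
  KernelBase L ∧ ContDiff ℝ 1 L ∧ (∃ C, ∀ u, |deriv L u| ≤ C) ∧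
  BoundedVariationOn (deriv L) Set.univ

/-- (G3) requirements on the kernel `K`. -/
def KernelCondK (K : ℝ → ℝ) : Prop :=
  KernelBase K ∧ ContDiff ℝ 2 K ∧ (∃ C, ∀ u, |deriv (deriv K) u| ≤ C) ∧
  BoundedVariationOn (deriv (deriv K)) Set.univ

/-- `φ_h(y, Y) = ∫_{-∞}^y h⁻¹ L((t-Y)/h) dt`. -/
def phiSm (L : ℝ → ℝ) (h y Y : ℝ) : ℝ := ∫ t in Set.Iic y, h⁻¹ * L ((t - Y) / h)

/-- `w_k(u) = u^k K(u)`. -/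
def wk (K : ℝ → ℝ) (k : ℕ) (u : ℝ) : ℝ := u ^ k * K u

/-- `p̂_{n,k}(x)`. -/
def phat {Ω : Type*} (K : ℝ → ℝ) (h1 : ℕ → ℝ) (X : ℕ → Ω → ℝ)
    (n k : ℕ) (x : ℝ) (ω : Ω) : ℝ :=
  (n : ℝ)⁻¹ * ∑ i ∈ Finset.range n, (h1 n)⁻¹ * wk K k ((x - X i ω) / h1 n)

/-- `Q̂_{n,k}(y,x)`. -/
def Qhat {Ω : Type*} (K L : ℝ → ℝ) (h1 h2 : ℕ → ℝ) (X Y : ℕ → Ω → ℝ)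
    (n k : ℕ) (y x : ℝ) (ω : Ω) : ℝ :=
  (n : ℝ)⁻¹ * ∑ i ∈ Finset.range n,
    phiSm L (h2 n) y (Y i ω) * ((h1 n)⁻¹ * wk K k ((x - X i ω) / h1 n))

/-- The smoothed local linear estimator `F̂_n(y|x)` in closed form. -/
def Fhat {Ω : Type*} (K L : ℝ → ℝ) (h1 h2 : ℕ → ℝ) (X Y : ℕ → Ω → ℝ)
    (n : ℕ) (y x : ℝ) (ω : Ω) : ℝ :=
  (Qhat K L h1 h2 X Y n 0 y x ω * phat K h1 X n 2 x ω
      - Qhat K L h1 h2 X Y n 1 y x ω * phat K h1 X n 1 x ω) /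
    (phat K h1 X n 0 x ω * phat K h1 X n 2 x ω - (phat K h1 X n 1 x ω) ^ 2)

/-- Bandwidth conditions (G4'). -/
structure BandG4' (h1 h2 : ℕ → ℝ) : Prop where
  pos1 : ∀ n, 0 < h1 n
  pos2 : ∀ n, 0 < h2 n
  to0₁ : Tendsto h1 atTop (𝓝 0)
  to0₂ : Tendsto h2 atTop (𝓝 0)
  r1 : Tendsto (fun n : ℕ => (n : ℝ) * h1 n ^ 3 / |Real.log (h1 n)|) atTop atTop
  r2 : Tendsto (fun n : ℕ => (n : ℝ) * (h1 n * h2 n) / |Real.log (h1 n * h2 n)|) atTop atTop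

/-- Bandwidth conditions (G4), for a given `α > 0`. -/
structure BandG4 (h1 h2 : ℕ → ℝ) (α : ℝ) : Prop where
  αpos : 0 < α
  pos1 : ∀ n, 0 < h1 n
  pos2 : ∀ n, 0 < h2 n
  b1 : Tendsto (fun n : ℕ => (n : ℝ) * h1 n ^ 8) atTop (𝓝 0)
  b2 : Tendsto (fun n : ℕ => (n : ℝ) * h2 n ^ 8) atTop (𝓝 0)
  b3 : Tendsto (fun n => h1 n ^ ((-1 : ℝ) - α / 2) * h2 n ^ 2) atTop (𝓝 0)
  b4 : Tendsto (fun n : ℕ => (n : ℝ) * h1 n ^ ((3 : ℝ) + α) / |Real.log (h1 n)|) atTop atTop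
  b5 : Tendsto (fun n : ℕ => (n : ℝ) * h1 n ^ ((1 : ℝ) + α) * h2 n / |Real.log (h1 n * h2 n)|)
        atTop atTop

/-- Bandwidth conditions (G4''), for a given `α > 0`. -/
structure BandG4'' (h1 h2 : ℕ → ℝ) (α : ℝ) : Prop where
  αpos : 0 < α
  pos1 : ∀ n, 0 < h1 n
  pos2 : ∀ n, 0 < h2 n
  to0₁ : Tendsto h1 atTop (𝓝 0)
  to0₂ : Tendsto h2 atTop (𝓝 0)
  b3 : Tendsto (fun n => h1 n ^ ((-1 : ℝ) - α / 2) * h2 n ^ 2) atTop (𝓝 0)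
  b4 : Tendsto (fun n : ℕ => (n : ℝ) * h1 n ^ ((3 : ℝ) + α) / |Real.log (h1 n)|) atTop atTop
  b5 : Tendsto (fun n : ℕ => (n : ℝ) * h1 n ^ ((1 : ℝ) + α) * h2 n / |Real.log (h1 n * h2 n)|)
        atTop atTop

/-- Marginal density of `X` built from a joint density of `(X,Y)`. -/
def fXm (fXY : ℝ → ℝ → ℝ) (x : ℝ) : ℝ := ∫ z, fXY x z

/-- Conditional distribution function `F(y|x)` built from a joint density. -/
def condCDF2 (fXY : ℝ → ℝ → ℝ) (y x : ℝ) : ℝ :=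
  (∫ z in Set.Iic y, fXY x z) / fXm fXY x

/-- Conditional density `f(y|x)` built from a joint density. -/
def condPDF2 (fXY : ℝ → ℝ → ℝ) (y x : ℝ) : ℝ := fXY x y / fXm fXY x

/-- Condition (G1') on the law of the pair `(X,Y)`, described through its
joint density `fXY` on `S_X × ℝ`, `S_X = (s0, s1)`. -/
structure CondG1 (fXY : ℝ → ℝ → ℝ) (s0 s1 b M δ : ℝ) : Prop where
  hs : s0 < s1
  hb : 0 < b
  hM : 0 < M
  hδ0 : 0 < δ
  hδ1 : δ ≤ 1
  nonneg : ∀ x y, 0 ≤ fXY x y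
  supp : ∀ x y, x ∉ Set.Ioo s0 s1 → fXY x y = 0
  Freg : HClass 3 δ M (Set.univ ×ˢ Set.Ioo s0 s1)
    (fun p : ℝ × ℝ => condCDF2 fXY p.1 p.2)
  fXreg : HClass 1 1 M (Set.Ioo s0 s1) (fXm fXY)
  fXlb : ∀ x ∈ Set.Ioo s0 s1, b ≤ fXm fXY x
  flb : ∀ γ ∈ Set.Ioo (0 : ℝ) (1 / 2), ∃ bγ > (0 : ℝ), ∀ x ∈ Set.Ioo s0 s1,
    ∀ y ∈ Set.Icc (genInv (fun z => condCDF2 fXY z x) γ)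
        (genInv (fun z => condCDF2 fXY z x) (1 - γ)),
      bγ ≤ condPDF2 fXY y x

/-- The data `(X_i, Y_i)` are i.i.d. with common law having density `fXY`. -/
structure IIDLaw2 {Ω : Type*} [MeasurableSpace Ω] (P : Measure Ω)
    (X Y : ℕ → Ω → ℝ) (fXY : ℝ → ℝ → ℝ) : Prop where
  measX : ∀ i, Measurable (X i)
  measY : ∀ i, Measurable (Y i)
  indep : iIndepFun (fun i ω => (X i ω, Y i ω)) P
  ident : ∀ i, IdentDistrib (fun ω => (X i ω, Y i ω)) (fun ω => (X 0 ω, Y 0 ω)) P P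
  law : Measure.map (fun ω => (X 0 ω, Y 0 ω)) P
    = (volume : Measure (ℝ × ℝ)).withDensity (fun p => ENNReal.ofReal (fXY p.1 p.2))

/-
Write `u i = (x - X i) / h` and `a i = K (u i)`. Then
`p̂₀ p̂₂ - p̂₁² = (n h)⁻² · ½ ∑ i j, a i * a j * (u i - u j) ^ 2`, and since `K` is continuous, even
and not identically zero, `K ≥ k₀ > 0` on `{u | c₁ ≤ |u| ≤ c₂}`. So it suffices that, on the side
of `x` facing the middle of `S_X`, two windows of width `ρ h` at distance `ρ h` from each other and
with `|u| ∈ [c₁, c₂]` each contain at least `T ≍ n h` sample points.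

Under (G1') the joint density is bounded below on the band `1/4 ≤ F(y|x) < 3/4`, whose height is at
least `1/(2M)` because `F(·|x)` is `M`-Lipschitz; hence `P(X ∈ C) ≥ β |C|` for `C ⊆ S_X`. Cutting
`S_X` into `≍ 1/h` cells of width `ρ h / 2`, Chebyshev's inequality and a union bound show that
every cell, hence every window, contains `T` points outside an event of probability `O(1/(n h²))`,
and `n h² → ∞` by (G4').
-/

lemma exists_pos_of_integral_pos {α : Type*} [MeasurableSpace α] {μ : Measure α} {f : α → ℝ}
    (h : 0 < ∫ x, f x ∂μ) : ∃ x, 0 < f x := by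
  by_contra! hf
  exact (integral_nonpos hf).not_gt h

lemma Function.Even.apply_abs {K : ℝ → ℝ} (hK : K.Even) (u : ℝ) : K |u| = K u := by
  rcases abs_choice u with h | h <;> rw [h]
  exact hK u

lemma Function.Even.exists_le_of_abs_mem_Icc {K : ℝ → ℝ} (hK : K.Even) (hc : Continuous K)
    {u₀ : ℝ} (hu₀ : 0 < K u₀) :
    ∃ k₀ > 0, ∃ c₁ c₂ : ℝ, 0 ≤ c₁ ∧ c₁ < c₂ ∧ ∀ u, |u| ∈ Icc c₁ c₂ → k₀ ≤ K u := by
  have hpos : 0 < K |u₀| := by rwa [hK.apply_abs]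
  have hnhds : {w | K |u₀| / 2 < K w} ∈ 𝓝 |u₀| :=
    hc.continuousAt.preimage_mem_nhds (Ioi_mem_nhds (by linarith))
  obtain ⟨c, hcu, hsub⟩ := exists_Ico_subset_of_mem_nhds hnhds ⟨|u₀| + 1, by linarith⟩
  refine ⟨K |u₀| / 2, by positivity, |u₀|, (|u₀| + c) / 2, abs_nonneg _, by linarith,
    fun u hu => ?_⟩
  have hlt : |u| < c := by linarith [hu.2]
  rw [← hK.apply_abs u]
  exact (hsub ⟨hu.1, hlt⟩).le

def momentDet {ι : Type*} (s : Finset ι) (a u : ι → ℝ) : ℝ :=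
  (∑ i ∈ s, a i) * (∑ i ∈ s, u i ^ 2 * a i) - (∑ i ∈ s, u i * a i) ^ 2

lemma momentDet_eq_sum_sum {ι : Type*} (s : Finset ι) (a u : ι → ℝ) :
    momentDet s a u = (∑ i ∈ s, ∑ j ∈ s, a i * a j * (u i - u j) ^ 2) / 2 := by
  have hexpand : ∑ i ∈ s, ∑ j ∈ s, a i * a j * (u i - u j) ^ 2 =
      ∑ i ∈ s, ∑ j ∈ s, (u i ^ 2 * a i * a j - 2 * (u i * a i) * (u j * a j)
        + a i * (u j ^ 2 * a j)) :=
    Finset.sum_congr rfl fun i _ => Finset.sum_congr rfl fun j _ => by ring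
  rw [momentDet, hexpand]
  simp only [Finset.sum_add_distrib, Finset.sum_sub_distrib, ← Finset.mul_sum, ← Finset.sum_mul]
  ring

lemma card_mul_card_mul_le_momentDet {ι : Type*} {s A B : Finset ι} (hA : A ⊆ s) (hB : B ⊆ s)
    {a u : ι → ℝ} (ha : ∀ i ∈ s, 0 ≤ a i) {k g : ℝ} (hk : 0 ≤ k) (hg : 0 ≤ g)
    (haA : ∀ i ∈ A, k ≤ a i) (haB : ∀ j ∈ B, k ≤ a j)
    (hsep : ∀ i ∈ A, ∀ j ∈ B, g ≤ |u i - u j|) :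
    (A.card : ℝ) * B.card * (k ^ 2 * g ^ 2) / 2 ≤ momentDet s a u := by
  have hterm : ∀ i ∈ s, ∀ j ∈ s, 0 ≤ a i * a j * (u i - u j) ^ 2 := fun i hi j hj =>
    mul_nonneg (mul_nonneg (ha i hi) (ha j hj)) (sq_nonneg _)
  have hpair : ∀ i ∈ A, ∀ j ∈ B, k ^ 2 * g ^ 2 ≤ a i * a j * (u i - u j) ^ 2 := by
    intro i hi j hj
    have hk2 : k ^ 2 ≤ a i * a j := by
      rw [sq]
      exact mul_le_mul (haA i hi) (haB j hj) hk (hk.trans (haA i hi))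
    have hg2 : g ^ 2 ≤ (u i - u j) ^ 2 := by
      rw [← sq_abs (u i - u j)]
      exact pow_le_pow_left₀ hg (hsep i hi j hj) 2
    exact mul_le_mul hk2 hg2 (sq_nonneg g) (mul_nonneg (ha i (hA hi)) (ha j (hB hj)))
  calc (A.card : ℝ) * B.card * (k ^ 2 * g ^ 2) / 2
      = (∑ i ∈ A, ∑ j ∈ B, k ^ 2 * g ^ 2) / 2 := by simp [mul_assoc]
    _ ≤ (∑ i ∈ A, ∑ j ∈ B, a i * a j * (u i - u j) ^ 2) / 2 := by
        gcongr ?_ / 2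
        exact Finset.sum_le_sum fun i hi => Finset.sum_le_sum fun j hj => hpair i hi j hj
    _ ≤ (∑ i ∈ s, ∑ j ∈ B, a i * a j * (u i - u j) ^ 2) / 2 := by
        gcongr ?_ / 2
        exact Finset.sum_le_sum_of_subset_of_nonneg hA fun i hi _ =>
          Finset.sum_nonneg fun j hj => hterm i hi j (hB hj)
    _ ≤ (∑ i ∈ s, ∑ j ∈ s, a i * a j * (u i - u j) ^ 2) / 2 := by
        gcongr ?_ / 2
        refine Finset.sum_le_sum fun i hi => ?_
        exact Finset.sum_le_sum_of_subset_of_nonneg hB fun j hj _ => hterm i hi j hj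
    _ = momentDet s a u := (momentDet_eq_sum_sum s a u).symm

section GenInv

variable {F : ℝ → ℝ} {t : ℝ}

lemma genInv_le_iff (hmono : Monotone F) (hcont : Continuous F) (hlo : ∃ y, F y < t)
    (hhi : ∃ y, t ≤ F y) {y : ℝ} : genInv F t ≤ y ↔ t ≤ F y := by
  have hbdd : BddBelow {y | t ≤ F y} := by
    obtain ⟨y₀, hy₀⟩ := hlo
    exact ⟨y₀, fun z hz => le_of_lt (hmono.reflect_lt (hy₀.trans_le hz))⟩
  have hmem : t ≤ F (genInv F t) :=
    (isClosed_le continuous_const hcont).csInf_mem hhi hbdd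
  exact ⟨fun h => hmem.trans (hmono h), fun h => csInf_le hbdd h⟩

lemma apply_genInv (hmono : Monotone F) (hcont : Continuous F) (hlo : ∃ y, F y < t)
    (hhi : ∃ y, t ≤ F y) : F (genInv F t) = t := by
  refine le_antisymm ?_ ((genInv_le_iff hmono hcont hlo hhi).1 le_rfl)
  have hleft : ∀ᶠ y in 𝓝[<] genInv F t, F y ≤ t :=
    eventually_nhdsWithin_of_forall fun y hy =>
      (not_le.1 fun h => (not_le.2 hy) ((genInv_le_iff hmono hcont hlo hhi).2 h)).le
  exact le_of_tendsto (hcont.continuousAt.tendsto.mono_left nhdsWithin_le_nhds) hleft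

end GenInv

def quantileBand (fXY : ℝ → ℝ → ℝ) (x : ℝ) : Set ℝ :=
  {y | 1 / 4 ≤ condCDF2 fXY y x ∧ condCDF2 fXY y x < 1 - 1 / 4}

lemma exists_condCDF2_lt {fXY : ℝ → ℝ → ℝ} {x t : ℝ} (ht : 0 < t) :
    ∃ y, condCDF2 fXY y x < t := by
  have hlim : Tendsto (fun y => condCDF2 fXY y x) atBot (𝓝 0) := by
    have h := (tendsto_integral_Iic_zero (μ := volume) (f := fXY x) tendsto_id).div_const
      (fXm fXY x)
    rwa [zero_div] at h
  exact (hlim.eventually (eventually_lt_nhds ht)).exists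

namespace CondG1

variable {fXY : ℝ → ℝ → ℝ} {s0 s1 b M δ x : ℝ}

lemma fXm_pos (hG1 : CondG1 fXY s0 s1 b M δ) (hx : x ∈ Ioo s0 s1) : 0 < fXm fXY x :=
  hG1.hb.trans_le (hG1.fXlb x hx)

lemma integrable (hG1 : CondG1 fXY s0 s1 b M δ) (hx : x ∈ Ioo s0 s1) : Integrable (fXY x) := by
  by_contra h
  have := hG1.fXm_pos hx
  rw [fXm, integral_undef h] at this
  exact lt_irrefl 0 this

lemma monotone_condCDF2 (hG1 : CondG1 fXY s0 s1 b M δ) (hx : x ∈ Ioo s0 s1) :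
    Monotone (fun y => condCDF2 fXY y x) := fun _ _ hyy' =>
  div_le_div_of_nonneg_right
    (setIntegral_mono_set (hG1.integrable hx).integrableOn
      (Eventually.of_forall fun z => hG1.nonneg x z) (Iic_subset_Iic.2 hyy').eventuallyLE)
    (hG1.fXm_pos hx).le

lemma continuous_condCDF2 (hG1 : CondG1 fXY s0 s1 b M δ) (hx : x ∈ Ioo s0 s1) :
    Continuous (fun y => condCDF2 fXY y x) :=
  hG1.Freg.1.continuousOn.comp_continuous
    (continuous_id.prodMk continuous_const) fun y => ⟨mem_univ y, hx⟩

lemma exists_le_condCDF2 (hG1 : CondG1 fXY s0 s1 b M δ) (hx : x ∈ Ioo s0 s1) {t : ℝ}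
    (ht : t < 1) : ∃ y, t ≤ condCDF2 fXY y x := by
  have hnum := tendsto_setIntegral_of_monotone (μ := volume) (f := fXY x)
    (fun _ => measurableSet_Iic) monotone_Iic
    (by rw [iUnion_Iic]; exact (hG1.integrable hx).integrableOn)
  rw [iUnion_Iic, setIntegral_univ] at hnum
  have hlim : Tendsto (fun y => condCDF2 fXY y x) atTop (𝓝 1) := by
    have h := hnum.div_const (fXm fXY x)
    rwa [← fXm, div_self (hG1.fXm_pos hx).ne'] at h
  exact (hlim.eventually (eventually_ge_nhds ht)).exists

lemma abs_condCDF2_sub_le (hG1 : CondG1 fXY s0 s1 b M δ) (hx : x ∈ Ioo s0 s1) (y y' : ℝ) :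
    |condCDF2 fXY y x - condCDF2 fXY y' x| ≤ M * |y - y'| := by
  set S : Set (ℝ × ℝ) := univ ×ˢ Ioo s0 s1
  have hS : IsOpen S := isOpen_univ.prod isOpen_Ioo
  have hderiv : ∀ z ∈ S, ‖fderivWithin ℝ (fun p : ℝ × ℝ => condCDF2 fXY p.1 p.2) S z‖ ≤ M :=
    fun z hz => by
      rw [← norm_iteratedFDerivWithin_one _ (hS.uniqueDiffWithinAt hz)]
      exact hG1.Freg.2.1 1 (by norm_num) z hz
  have := (convex_univ.prod (convex_Ioo s0 s1)).norm_image_sub_le_of_norm_fderivWithin_le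
    (hG1.Freg.1.differentiableOn (by norm_num)) hderiv
    (x := (y', x)) (y := (y, x)) ⟨mem_univ _, hx⟩ ⟨mem_univ _, hx⟩
  simpa [Prod.norm_def] using this

lemma condCDF2_eq_zero (hG1 : CondG1 fXY s0 s1 b M δ) (hx : x ∉ Ioo s0 s1) (y : ℝ) :
    condCDF2 fXY y x = 0 := by
  simp [condCDF2, fXm, hG1.supp x _ hx]

lemma measurable_condCDF2 (hG1 : CondG1 fXY s0 s1 b M δ) :
    Measurable (fun p : ℝ × ℝ => condCDF2 fXY p.2 p.1) := by
  classical
  set S : Set (ℝ × ℝ) := univ ×ˢ Ioo s0 s1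
  have hpiece : (fun p : ℝ × ℝ => condCDF2 fXY p.1 p.2) =
      S.piecewise (fun p => condCDF2 fXY p.1 p.2) 0 := by
    ext ⟨y, x⟩
    by_cases hx : x ∈ Ioo s0 s1
    · simp [S, hx]
    · simp [S, hx, hG1.condCDF2_eq_zero hx]
  have : Measurable (fun p : ℝ × ℝ => condCDF2 fXY p.1 p.2) := by
    rw [hpiece]
    exact hG1.Freg.1.continuousOn.measurable_piecewise continuousOn_const
      (MeasurableSet.univ.prod measurableSet_Ioo)
  exact this.comp measurable_swap

lemma genInv_condCDF2_le_iff (hG1 : CondG1 fXY s0 s1 b M δ) (hx : x ∈ Ioo s0 s1) {t : ℝ}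
    (ht₀ : 0 < t) (ht₁ : t < 1) {y : ℝ} :
    genInv (fun z => condCDF2 fXY z x) t ≤ y ↔ t ≤ condCDF2 fXY y x :=
  genInv_le_iff (hG1.monotone_condCDF2 hx) (hG1.continuous_condCDF2 hx) (exists_condCDF2_lt ht₀)
    (hG1.exists_le_condCDF2 hx ht₁)

lemma condCDF2_genInv (hG1 : CondG1 fXY s0 s1 b M δ) (hx : x ∈ Ioo s0 s1) {t : ℝ}
    (ht₀ : 0 < t) (ht₁ : t < 1) : condCDF2 fXY (genInv (fun z => condCDF2 fXY z x) t) x = t :=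
  apply_genInv (hG1.monotone_condCDF2 hx) (hG1.continuous_condCDF2 hx) (exists_condCDF2_lt ht₀)
    (hG1.exists_le_condCDF2 hx ht₁)

lemma exists_pos_le_fXY_of_mem_quantileBand (hG1 : CondG1 fXY s0 s1 b M δ) :
    ∃ β > 0, ∀ x ∈ Ioo s0 s1, ∀ y ∈ quantileBand fXY x, β ≤ fXY x y := by
  obtain ⟨bγ, hbγ, hflb⟩ := hG1.flb (1 / 4) (by norm_num)
  refine ⟨bγ * b, mul_pos hbγ hG1.hb, fun x hx y hy => ?_⟩
  have hlow := (hG1.genInv_condCDF2_le_iff hx (t := 1 / 4) (by norm_num) (by norm_num)).2 hy.1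
  have hup : y ≤ genInv (fun z => condCDF2 fXY z x) (1 - 1 / 4) :=
    le_of_lt <| lt_of_not_ge fun h =>
      hy.2.not_ge ((hG1.genInv_condCDF2_le_iff hx (by norm_num) (by norm_num)).1 h)
  have hcond := hflb x hx y ⟨hlow, hup⟩
  rw [condPDF2, le_div_iff₀ (hG1.fXm_pos hx)] at hcond
  calc bγ * b ≤ bγ * fXm fXY x := by gcongr; exact hG1.fXlb x hx
    _ ≤ fXY x y := hcond

lemma ofReal_inv_le_volume_quantileBand (hG1 : CondG1 fXY s0 s1 b M δ) (hx : x ∈ Ioo s0 s1) :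
    ENNReal.ofReal (2 * M)⁻¹ ≤ volume (quantileBand fXY x) := by
  set q := genInv (fun z => condCDF2 fXY z x) (1 / 4)
  set q' := genInv (fun z => condCDF2 fXY z x) (1 - 1 / 4)
  have hq : condCDF2 fXY q x = 1 / 4 := hG1.condCDF2_genInv hx (by norm_num) (by norm_num)
  have hq' : condCDF2 fXY q' x = 1 - 1 / 4 := hG1.condCDF2_genInv hx (by norm_num) (by norm_num)
  have hqq' : q ≤ q' := (hG1.genInv_condCDF2_le_iff hx (by norm_num) (by norm_num)).2 (by
    rw [hq']; norm_num)
  have hsub : Ico q q' ⊆ quantileBand fXY x := fun y hy =>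
    ⟨hq ▸ hG1.monotone_condCDF2 hx hy.1, lt_of_not_ge fun h =>
      hy.2.not_ge ((hG1.genInv_condCDF2_le_iff hx (by norm_num) (by norm_num)).2 h)⟩
  have hgap : (2 * M)⁻¹ ≤ q' - q := by
    have hlip := hG1.abs_condCDF2_sub_le hx q' q
    rw [hq, hq', abs_of_nonneg (sub_nonneg.2 hqq')] at hlip
    rw [inv_le_iff_one_le_mul₀' (by linarith [hG1.hM])]
    norm_num at hlip
    linarith
  calc ENNReal.ofReal (2 * M)⁻¹ ≤ ENNReal.ofReal (q' - q) := ENNReal.ofReal_le_ofReal hgap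
    _ = volume (Ico q q') := Real.volume_Ico.symm
    _ ≤ volume (quantileBand fXY x) := measure_mono hsub

end CondG1

lemma IIDLaw2.exists_pos_mul_volume_le_measure_preimage {Ω : Type*} [MeasurableSpace Ω]
    {P : Measure Ω} {X Y : ℕ → Ω → ℝ} {fXY : ℝ → ℝ → ℝ} {s0 s1 b M δ : ℝ}
    (hiid : IIDLaw2 P X Y fXY) (hG1 : CondG1 fXY s0 s1 b M δ) :
    ∃ β > 0, ∀ C : Set ℝ, MeasurableSet C → C ⊆ Ioo s0 s1 →
      ENNReal.ofReal β * volume C ≤ P (X 0 ⁻¹' C) := by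
  -- `fXY` need not be measurable, so we only compare it with a constant, on a measurable set `R`.
  obtain ⟨β₀, hβ₀, hdens⟩ := hG1.exists_pos_le_fXY_of_mem_quantileBand
  have hM := hG1.hM
  refine ⟨β₀ * (2 * M)⁻¹, by positivity, fun C hC hCS => ?_⟩
  set R : Set (ℝ × ℝ) := {p | p.1 ∈ C ∧ p.2 ∈ quantileBand fXY p.1}
  have hF := hG1.measurable_condCDF2
  have hR : MeasurableSet R := (hC.preimage measurable_fst).inter
    ((measurableSet_le measurable_const hF).inter (measurableSet_lt hF measurable_const))
  have hvolR : ENNReal.ofReal (2 * M)⁻¹ * volume C ≤ volume R := by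
    rw [Measure.volume_eq_prod, Measure.prod_apply hR]
    calc ENNReal.ofReal (2 * M)⁻¹ * volume C = ∫⁻ _ in C, ENNReal.ofReal (2 * M)⁻¹ :=
          (setLIntegral_const _ _).symm
      _ ≤ ∫⁻ x in C, volume (Prod.mk x ⁻¹' R) := setLIntegral_mono' hC fun x hx => by
          simpa [R, hx] using hG1.ofReal_inv_le_volume_quantileBand (hCS hx)
      _ ≤ ∫⁻ x, volume (Prod.mk x ⁻¹' R) := setLIntegral_le_lintegral _ _
  have hRP : ENNReal.ofReal β₀ * volume R ≤ P (X 0 ⁻¹' C) :=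
    calc ENNReal.ofReal β₀ * volume R = ∫⁻ _ in R, ENNReal.ofReal β₀ :=
          (setLIntegral_const _ _).symm
      _ ≤ ∫⁻ p in R, ENNReal.ofReal (fXY p.1 p.2) := setLIntegral_mono' hR fun p hp =>
          ENNReal.ofReal_le_ofReal (hdens p.1 (hCS hp.1) p.2 hp.2)
      _ = P ((fun ω => (X 0 ω, Y 0 ω)) ⁻¹' R) := by
          rw [← withDensity_apply _ hR, ← hiid.law,
            Measure.map_apply ((hiid.measX 0).prodMk (hiid.measY 0)) hR]
      _ ≤ P (X 0 ⁻¹' C) := measure_mono fun ω hω => hω.1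
  calc ENNReal.ofReal (β₀ * (2 * M)⁻¹) * volume C
      = ENNReal.ofReal β₀ * (ENNReal.ofReal (2 * M)⁻¹ * volume C) := by
        rw [ENNReal.ofReal_mul hβ₀.le, mul_assoc]
    _ ≤ ENNReal.ofReal β₀ * volume R := by gcongr
    _ ≤ P (X 0 ⁻¹' C) := hRP

open Classical in
def pointCount {α : Type*} (ξ : ℕ → α) (n : ℕ) (S : Set α) : ℕ :=
  ((Finset.range n).filter fun i => ξ i ∈ S).card

section PointCount

variable {α β : Type*}

lemma pointCount_mono (ξ : ℕ → α) (n : ℕ) {S S' : Set α} (h : S ⊆ S') :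
    pointCount ξ n S ≤ pointCount ξ n S' :=
  Finset.card_le_card fun i hi => by
    simp only [Finset.mem_filter] at hi ⊢
    exact ⟨hi.1, h hi.2⟩

lemma pointCount_congr {ξ : ℕ → α} {ζ : ℕ → β} {n : ℕ} {S : Set α} {S' : Set β}
    (h : ∀ i, ξ i ∈ S ↔ ζ i ∈ S') : pointCount ξ n S = pointCount ζ n S' := by
  unfold pointCount
  congr 1
  ext i
  simp only [Finset.mem_filter, h]

lemma exists_finset_card_eq_pointCount (ξ : ℕ → α) (n : ℕ) (S : Set α) :
    ∃ A ⊆ Finset.range n, A.card = pointCount ξ n S ∧ ∀ i ∈ A, ξ i ∈ S := by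
  classical
  exact ⟨_, Finset.filter_subset _ _, rfl, fun i hi => (Finset.mem_filter.1 hi).2⟩

end PointCount

lemma measure_pointCount_lt_le {Ω β : Type*} [MeasurableSpace Ω] [MeasurableSpace β]
    {P : Measure Ω} [IsProbabilityMeasure P] {Z : ℕ → Ω → β} (hZ : ∀ i, Measurable (Z i))
    (hind : iIndepFun Z P) {C : Set β} (hC : MeasurableSet C) {p : ℝ} (hp : 0 < p)
    (hpC : ∀ i, ENNReal.ofReal p ≤ P (Z i ⁻¹' C)) {n : ℕ} (hn : 0 < n) :
    P {ω | (pointCount (fun i => Z i ω) n C : ℝ) < n * p / 2} ≤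
      ENNReal.ofReal (4 / (n * p)) := by
  set W : ℕ → Ω → ℝ := fun i => (Z i ⁻¹' C).indicator 1
  have hWind : iIndepFun W P :=
    hind.comp (fun _ => C.indicator 1) fun _ => measurable_one.indicator hC
  have hWmeas : ∀ i, MeasurableSet (Z i ⁻¹' C) := fun i => hZ i hC
  have hWL2 : ∀ i, MemLp (W i) 2 P := fun i =>
    memLp_indicator_const 2 (hWmeas i) 1 (Or.inr (measure_ne_top _ _))
  have hEW : ∀ i, P[W i] = P.real (Z i ⁻¹' C) := fun i => integral_indicator_one (hWmeas i)
  have hVarW : ∀ i, variance (W i) P ≤ P.real (Z i ⁻¹' C) := fun i => by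
    have hsq : W i ^ 2 = W i := by
      ext ω
      by_cases h : ω ∈ Z i ⁻¹' C <;> simp [W, h]
    have := variance_le_expectation_sq (hWL2 i).1
    rwa [hsq, hEW] at this
  set N : Ω → ℝ := ∑ i ∈ Finset.range n, W i
  set m : ℝ := ∑ i ∈ Finset.range n, P.real (Z i ⁻¹' C)
  have hNcount : ∀ ω, N ω = (pointCount (fun i => Z i ω) n C : ℝ) := by
    intro ω
    simp only [N, W, pointCount, Finset.sum_apply, Finset.card_filter, Nat.cast_sum, Nat.cast_ite,
      Nat.cast_one, Nat.cast_zero]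
    rfl
  have hEN : P[N] = m := by
    simp only [N, m, ← hEW, Finset.sum_apply]
    exact integral_finsetSum _ fun i _ => (hWL2 i).integrable one_le_two
  have hVarN : variance N P ≤ m := by
    rw [IndepFun.variance_sum (fun i _ => hWL2 i) fun i _ j _ hij => hWind.indepFun hij]
    exact Finset.sum_le_sum fun i _ => hVarW i
  have hnp : n * p ≤ m := by
    have : ∀ i, p ≤ P.real (Z i ⁻¹' C) := fun i =>
      (ENNReal.ofReal_le_iff_le_toReal (measure_ne_top _ _)).1 (hpC i)
    simpa using Finset.sum_le_sum fun i (_ : i ∈ Finset.range n) => this i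
  have hnp₀ : 0 < n * p := mul_pos (Nat.cast_pos.2 hn) hp
  have hsub : {ω | (pointCount (fun i => Z i ω) n C : ℝ) < n * p / 2} ⊆
      {ω | m / 2 ≤ |N ω - P[N]|} := fun ω hω => by
    have hNω : N ω < n * p / 2 := by rw [hNcount]; exact hω
    show m / 2 ≤ |N ω - P[N]|
    rw [hEN, abs_sub_comm]
    exact le_abs.2 (Or.inl (by linarith))
  calc _ ≤ P {ω | m / 2 ≤ |N ω - P[N]|} := measure_mono hsub
    _ ≤ ENNReal.ofReal (variance N P / (m / 2) ^ 2) :=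
        meas_ge_le_variance_div_sq (memLp_finsetSum' _ fun i _ => hWL2 i) (by linarith)
    _ ≤ ENNReal.ofReal (4 / (n * p)) := by
        refine ENNReal.ofReal_le_ofReal ?_
        calc variance N P / (m / 2) ^ 2 ≤ m / (m / 2) ^ 2 := by gcongr
          _ = 4 / m := by field_simp; ring
          _ ≤ 4 / (n * p) := by gcongr

lemma exists_sign_sub_mem_Ioo {s0 s1 x w : ℝ} (hx : x ∈ Ioo s0 s1) (hw : w < (s1 - s0) / 2) :
    ∃ σ : ℝ, (σ = 1 ∨ σ = -1) ∧ ∀ t ∈ Icc 0 w, x - σ * t ∈ Ioo s0 s1 := by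
  rcases le_or_gt ((s0 + s1) / 2) x with hmid | hmid
  · exact ⟨1, Or.inl rfl, fun t ht => ⟨by linarith [ht.2], by linarith [ht.1, hx.2]⟩⟩
  · exact ⟨-1, Or.inr rfl, fun t ht => ⟨by linarith [ht.1, hx.1], by linarith [ht.2]⟩⟩

section Windows

variable {ξ : ℕ → ℝ} {n : ℕ} {s0 s1 x h ρ T : ℝ}

lemma le_pointCount_signed_window (hh : 0 < h)
    (hwin : ∀ u, s0 < u → u + ρ * h < s1 → T ≤ pointCount ξ n (Icc u (u + ρ * h)))
    {σ a : ℝ} (hσ : σ = 1 ∨ σ = -1) (ha : x - σ * (a * h) ∈ Ioo s0 s1)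
    (haρ : x - σ * ((a + ρ) * h) ∈ Ioo s0 s1) :
    T ≤ pointCount (fun i => σ * ((x - ξ i) / h)) n (Icc a (a + ρ)) := by
  rcases hσ with rfl | rfl
  · refine (hwin (x - (a + ρ) * h) (by linarith [haρ.1]) (by linarith [ha.2])).trans_eq ?_
    refine congrArg _ (pointCount_congr fun i => ?_)
    simp only [one_mul, mem_Icc, le_div_iff₀ hh, div_le_iff₀ hh]
    constructor <;> rintro ⟨h₁, h₂⟩ <;> constructor <;> linarith
  · refine (hwin (x + a * h) (by linarith [ha.1]) (by linarith [haρ.2])).trans_eq ?_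
    refine congrArg _ (pointCount_congr fun i => ?_)
    simp only [neg_one_mul, mem_Icc, le_neg, neg_le, le_div_iff₀ hh, div_le_iff₀ hh]
    constructor <;> rintro ⟨h₁, h₂⟩ <;> constructor <;> linarith

lemma exists_separated_windows (hh : 0 < h)
    (hwin : ∀ u, s0 < u → u + ρ * h < s1 → T ≤ pointCount ξ n (Icc u (u + ρ * h)))
    (hx : x ∈ Ioo s0 s1) {c₁ c₂ : ℝ} (hc₁ : 0 ≤ c₁) (hρ : 0 ≤ ρ) (hρc : 3 * ρ ≤ c₂ - c₁)
    (hc₂ : c₂ * h < (s1 - s0) / 2) :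
    ∃ A ⊆ Finset.range n, ∃ B ⊆ Finset.range n, T ≤ A.card ∧ T ≤ B.card ∧
      (∀ i ∈ A, |(x - ξ i) / h| ∈ Icc c₁ c₂) ∧ (∀ j ∈ B, |(x - ξ j) / h| ∈ Icc c₁ c₂) ∧
      ∀ i ∈ A, ∀ j ∈ B, ρ ≤ |(x - ξ i) / h - (x - ξ j) / h| := by
  obtain ⟨σ, hσ, hside⟩ := exists_sign_sub_mem_Ioo hx hc₂
  have hmem : ∀ t ∈ Icc 0 c₂, x - σ * (t * h) ∈ Ioo s0 s1 := fun t ht =>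
    hside _ ⟨mul_nonneg ht.1 hh.le, mul_le_mul_of_nonneg_right ht.2 hh.le⟩
  have habs : ∀ v, |σ * v| = |v| := fun v => by rcases hσ with rfl | rfl <;> simp
  obtain ⟨A, hA, hAcard, hAmem⟩ := exists_finset_card_eq_pointCount
    (fun i => σ * ((x - ξ i) / h)) n (Icc c₁ (c₁ + ρ))
  obtain ⟨B, hB, hBcard, hBmem⟩ := exists_finset_card_eq_pointCount
    (fun i => σ * ((x - ξ i) / h)) n (Icc (c₂ - ρ) (c₂ - ρ + ρ))
  refine ⟨A, hA, B, hB, ?_, ?_, fun i hi => ?_, fun j hj => ?_, fun i hi j hj => ?_⟩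
  · rw [hAcard]
    exact le_pointCount_signed_window hh hwin hσ (hmem _ ⟨hc₁, by linarith⟩)
      (hmem _ ⟨by linarith, by linarith⟩)
  · rw [hBcard]
    exact le_pointCount_signed_window hh hwin hσ (hmem _ ⟨by linarith, by linarith⟩)
      (hmem _ ⟨by linarith, by linarith⟩)
  · obtain ⟨h₁, h₂⟩ := hAmem i hi
    rw [← habs, abs_of_nonneg (by linarith)]
    exact ⟨h₁, by linarith⟩
  · obtain ⟨h₁, h₂⟩ := hBmem j hj
    rw [← habs, abs_of_nonneg (by linarith)]
    exact ⟨by linarith, by linarith⟩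
  · have hi' := hAmem i hi
    have hj' := hBmem j hj
    rw [← habs, mul_sub, abs_sub_comm]
    exact le_abs.2 (Or.inl (by linarith [hi'.2, hj'.1]))

end Windows

lemma phat_mul_phat_sub_sq_eq {Ω : Type*} (K : ℝ → ℝ) (h1 : ℕ → ℝ) (X : ℕ → Ω → ℝ) (n : ℕ)
    (x : ℝ) (ω : Ω) :
    phat K h1 X n 0 x ω * phat K h1 X n 2 x ω - phat K h1 X n 1 x ω ^ 2 =
      ((n : ℝ)⁻¹ * (h1 n)⁻¹) ^ 2 * momentDet (Finset.range n)
        (fun i => K ((x - X i ω) / h1 n)) (fun i => (x - X i ω) / h1 n) := by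
  simp only [phat, wk, momentDet, pow_zero, one_mul, pow_one, ← Finset.mul_sum]
  ring

lemma le_phat_mul_phat_sub_sq {Ω : Type*} {K : ℝ → ℝ} {h1 : ℕ → ℝ} {X : ℕ → Ω → ℝ} {n : ℕ}
    {ω : Ω} {s0 s1 x k₀ c₁ c₂ ρ T : ℝ} (hK : ∀ u, 0 ≤ K u) (hk₀ : 0 ≤ k₀)
    (hKlb : ∀ u, |u| ∈ Icc c₁ c₂ → k₀ ≤ K u) (hc₁ : 0 ≤ c₁) (hρ : 0 ≤ ρ)
    (hρc : 3 * ρ ≤ c₂ - c₁) (hh : 0 < h1 n) (hc₂ : c₂ * h1 n < (s1 - s0) / 2) (hT : 0 ≤ T)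
    (hwin : ∀ u, s0 < u → u + ρ * h1 n < s1 →
      T ≤ pointCount (X · ω) n (Icc u (u + ρ * h1 n)))
    (hx : x ∈ Ioo s0 s1) :
    ((n : ℝ)⁻¹ * (h1 n)⁻¹) ^ 2 * (T * T * (k₀ ^ 2 * ρ ^ 2) / 2) ≤
      phat K h1 X n 0 x ω * phat K h1 X n 2 x ω - phat K h1 X n 1 x ω ^ 2 := by
  obtain ⟨A, hA, B, hB, hAT, hBT, hAK, hBK, hsep⟩ :=
    exists_separated_windows hh hwin hx hc₁ hρ hρc hc₂
  rw [phat_mul_phat_sub_sq_eq]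
  refine mul_le_mul_of_nonneg_left ?_ (sq_nonneg _)
  calc T * T * (k₀ ^ 2 * ρ ^ 2) / 2 ≤ A.card * B.card * (k₀ ^ 2 * ρ ^ 2) / 2 := by gcongr
    _ ≤ _ := card_mul_card_mul_le_momentDet hA hB (fun i _ => hK _) hk₀ hρ
        (fun i hi => hKlb _ (hAK i hi)) (fun j hj => hKlb _ (hBK j hj)) hsep

def gridCell (s0 l : ℝ) (j : ℕ) : Set ℝ := Ioo (s0 + j * l) (s0 + (j + 1) * l)

section Grid

variable {s0 s1 l : ℝ}

lemma volume_gridCell (j : ℕ) : volume (gridCell s0 l j) = ENNReal.ofReal l := by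
  rw [gridCell, Real.volume_Ioo]
  ring_nf

lemma gridCell_subset_Ioo (hl : 0 < l) {j : ℕ} (hj : j < ⌊(s1 - s0) / l⌋₊) :
    gridCell s0 l j ⊆ Ioo s0 s1 := by
  have hpos : 0 ≤ (s1 - s0) / l := (Nat.cast_nonneg j).trans (Nat.lt_of_lt_floor hj).le
  have hj' : ((j + 1 : ℕ) : ℝ) ≤ (s1 - s0) / l := (Nat.le_floor_iff hpos).1 hj
  rw [le_div_iff₀ hl] at hj'
  push_cast at hj'
  exact Ioo_subset_Ioo (by nlinarith [(Nat.cast_nonneg j : (0 : ℝ) ≤ j)]) (by linarith)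

lemma exists_gridCell_subset_Icc (hl : 0 < l) {u : ℝ} (hu₀ : s0 < u) (hu₁ : u + 2 * l < s1) :
    ∃ j < ⌊(s1 - s0) / l⌋₊, gridCell s0 l j ⊆ Icc u (u + 2 * l) := by
  set j := ⌈(u - s0) / l⌉₊
  have hup : u ≤ s0 + j * l := by
    have := Nat.le_ceil ((u - s0) / l)
    rw [div_le_iff₀ hl] at this
    linarith
  have hlow : (j : ℝ) * l < u - s0 + l := by
    have := Nat.ceil_lt_add_one (div_nonneg (sub_nonneg.2 hu₀.le) hl.le)
    rw [← lt_div_iff₀ hl, add_div, div_self hl.ne']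
    exact this
  refine ⟨j, ?_, fun y hy => ⟨by linarith [hy.1], by linarith [hy.2]⟩⟩
  rw [Nat.lt_iff_add_one_le, Nat.le_floor_iff (div_nonneg (by linarith) hl.le), le_div_iff₀ hl]
  push_cast
  linarith

end Grid

def AllCellsHit (ξ : ℕ → ℝ) (n : ℕ) (s0 s1 l T : ℝ) : Prop :=
  ∀ j < ⌊(s1 - s0) / l⌋₊, T ≤ pointCount ξ n (gridCell s0 l j)

lemma AllCellsHit.le_pointCount_Icc {ξ : ℕ → ℝ} {n : ℕ} {s0 s1 l T u : ℝ}
    (h : AllCellsHit ξ n s0 s1 l T) (hl : 0 < l) (hu₀ : s0 < u) (hu₁ : u + 2 * l < s1) :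
    T ≤ pointCount ξ n (Icc u (u + 2 * l)) := by
  obtain ⟨j, hj, hsub⟩ := exists_gridCell_subset_Icc hl hu₀ hu₁
  exact (h j hj).trans (by exact_mod_cast pointCount_mono ξ n hsub)

lemma IIDLaw2.measure_not_allCellsHit_le {Ω : Type*} [MeasurableSpace Ω] {P : Measure Ω}
    [IsProbabilityMeasure P] {X Y : ℕ → Ω → ℝ} {fXY : ℝ → ℝ → ℝ} (hiid : IIDLaw2 P X Y fXY)
    {s0 s1 β l : ℝ} (hs : s0 ≤ s1) (hβ : 0 < β) (hl : 0 < l)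
    (hmass : ∀ C : Set ℝ, MeasurableSet C → C ⊆ Ioo s0 s1 →
      ENNReal.ofReal β * volume C ≤ P (X 0 ⁻¹' C))
    {n : ℕ} (hn : 0 < n) :
    P {ω | ¬ AllCellsHit (X · ω) n s0 s1 l (n * (β * l) / 2)} ≤
      ENNReal.ofReal ((s1 - s0) / l * (4 / (n * (β * l)))) := by
  set N := ⌊(s1 - s0) / l⌋₊
  have hXind : iIndepFun X P := hiid.indep.comp (fun _ => Prod.fst) fun _ => measurable_fst
  have hcell : ∀ j < N, P {ω | (pointCount (X · ω) n (gridCell s0 l j) : ℝ) < n * (β * l) / 2}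
      ≤ ENNReal.ofReal (4 / (n * (β * l))) := fun j hj =>
    measure_pointCount_lt_le hiid.measX hXind measurableSet_Ioo (mul_pos hβ hl) (fun i => by
      have hid : IdentDistrib (X i) (X 0) P P := (hiid.ident i).comp measurable_fst
      rw [hid.measure_mem_eq measurableSet_Ioo,
        ENNReal.ofReal_mul hβ.le, ← volume_gridCell (s0 := s0) (l := l) j]
      exact hmass _ measurableSet_Ioo (gridCell_subset_Ioo hl hj)) hn
  have hsub : {ω | ¬ AllCellsHit (X · ω) n s0 s1 l (n * (β * l) / 2)} ⊆
      ⋃ j ∈ Finset.range N, {ω | (pointCount (X · ω) n (gridCell s0 l j) : ℝ) < n * (β * l) / 2} :=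
    fun ω hω => by
      obtain ⟨j, hj, hlt⟩ : ∃ j < N, _ := by simpa [AllCellsHit] using hω
      exact mem_biUnion (Finset.mem_range.2 hj) hlt
  calc _ ≤ ∑ j ∈ Finset.range N,
        P {ω | (pointCount (X · ω) n (gridCell s0 l j) : ℝ) < n * (β * l) / 2} :=
        (measure_mono hsub).trans (measure_biUnion_finset_le _ _)
    _ ≤ ∑ _j ∈ Finset.range N, ENNReal.ofReal (4 / (n * (β * l))) :=
        Finset.sum_le_sum fun j hj => hcell j (Finset.mem_range.1 hj)
    _ = (N : ENNReal) * ENNReal.ofReal (4 / (n * (β * l))) := by simp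
    _ ≤ ENNReal.ofReal ((s1 - s0) / l) * ENNReal.ofReal (4 / (n * (β * l))) := by
        gcongr
        rw [← ENNReal.ofReal_natCast]
        exact ENNReal.ofReal_le_ofReal (Nat.floor_le (div_nonneg (sub_nonneg.2 hs) hl.le))
    _ = _ := (ENNReal.ofReal_mul (div_nonneg (sub_nonneg.2 hs) hl.le)).symm

lemma tendsto_natCast_mul_sq_atTop {h : ℕ → ℝ} (hpos : ∀ n, 0 < h n)
    (hzero : Tendsto h atTop (𝓝 0))
    (hrate : Tendsto (fun n : ℕ => (n : ℝ) * h n ^ 3 / |Real.log (h n)|) atTop atTop) :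
    Tendsto (fun n : ℕ => (n : ℝ) * h n ^ 2) atTop atTop := by
  refine tendsto_atTop_mono' atTop ?_ hrate
  filter_upwards [hzero.eventually (eventually_le_nhds (by norm_num : (0 : ℝ) < 1 / 2))] with n hn
  have hp := hpos n
  have hlog : h n ≤ |Real.log (h n)| := by
    rw [abs_of_neg (Real.log_neg hp (by linarith))]
    linarith [Real.log_le_sub_one_of_pos hp]
  calc (n : ℝ) * h n ^ 3 / |Real.log (h n)| ≤ n * h n ^ 3 / h n := by gcongr
    _ = n * h n ^ 2 := by field_simp

lemma tendsto_measure_of_tendsto_measure_compl {α ι : Type*} [MeasurableSpace α] {μ : Measure α}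
    [IsProbabilityMeasure μ] {l : Filter ι} {s : ι → Set α}
    (h : Tendsto (fun i => μ (s i)ᶜ) l (𝓝 0)) : Tendsto (fun i => μ (s i)) l (𝓝 1) := by
  have hlow : ∀ i, 1 - μ (s i)ᶜ ≤ μ (s i) := fun i => by
    rw [tsub_le_iff_right, ← measure_univ (μ := μ), ← union_compl_self (s i)]
    exact measure_union_le _ _
  have hlim : Tendsto (fun i => 1 - μ (s i)ᶜ) l (𝓝 1) := by
    simpa using ENNReal.Tendsto.sub tendsto_const_nhds h (Or.inl ENNReal.one_ne_top)
  exact tendsto_of_tendsto_of_tendsto_of_le_of_le hlim tendsto_const_nhds hlow fun i => prob_le_one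

lemma IIDLaw2.eventually_measure_compl_le {Ω : Type*} [MeasurableSpace Ω] {P : Measure Ω}
    [IsProbabilityMeasure P] {X Y : ℕ → Ω → ℝ} {fXY : ℝ → ℝ → ℝ} (hiid : IIDLaw2 P X Y fXY)
    {s0 s1 β : ℝ} (hs : s0 < s1) (hβ : 0 < β)
    (hmass : ∀ C : Set ℝ, MeasurableSet C → C ⊆ Ioo s0 s1 →
      ENNReal.ofReal β * volume C ≤ P (X 0 ⁻¹' C))
    {K : ℝ → ℝ} {k₀ c₁ c₂ ρ : ℝ} (hK : ∀ u, 0 ≤ K u) (hk₀ : 0 ≤ k₀)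
    (hKlb : ∀ u, |u| ∈ Icc c₁ c₂ → k₀ ≤ K u) (hc₁ : 0 ≤ c₁) (hρ : 0 < ρ)
    (hρc : 3 * ρ ≤ c₂ - c₁) {h1 : ℕ → ℝ} (hpos : ∀ n, 0 < h1 n)
    (hzero : Tendsto h1 atTop (𝓝 0)) :
    ∀ᶠ n in atTop, P {ω | ∀ x ∈ Ioo s0 s1, (β * ρ / 4) ^ 2 * (k₀ ^ 2 * ρ ^ 2) / 2 ≤
        phat K h1 X n 0 x ω * phat K h1 X n 2 x ω - phat K h1 X n 1 x ω ^ 2}ᶜ ≤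
      ENNReal.ofReal (16 * (s1 - s0) / (β * ρ ^ 2) * ((n : ℝ) * h1 n ^ 2)⁻¹) := by
  have hsmall : ∀ᶠ n in atTop, c₂ * h1 n < (s1 - s0) / 2 :=
    (hzero.const_mul c₂).eventually (eventually_lt_nhds (by linarith))
  filter_upwards [hsmall, eventually_gt_atTop 0] with n hn hn₀
  have hh := hpos n
  have hl : 0 < ρ * h1 n / 2 := by positivity
  have hbound := hiid.measure_not_allCellsHit_le hs.le hβ hl hmass hn₀
  rw [show (s1 - s0) / (ρ * h1 n / 2) * (4 / (n * (β * (ρ * h1 n / 2)))) =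
      16 * (s1 - s0) / (β * ρ ^ 2) * ((n : ℝ) * h1 n ^ 2)⁻¹ by field_simp; ring] at hbound
  refine (measure_mono fun ω hω hAll => ?_).trans hbound
  refine hω fun x hx => ?_
  have hdet := le_phat_mul_phat_sub_sq (T := n * (β * (ρ * h1 n / 2)) / 2) hK hk₀ hKlb
    hc₁ hρ.le hρc hh hn (by positivity) (fun u hu₀ hu₁ => by
      have := hAll.le_pointCount_Icc hl hu₀ (by linarith)
      rwa [show 2 * (ρ * h1 n / 2) = ρ * h1 n by ring] at this) hx
  convert hdet using 1
  field_simp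
  ring

theorem stmt3
    {Ω : Type*} [MeasurableSpace Ω] (P : Measure Ω) [IsProbabilityMeasure P]
    (X Y : ℕ → Ω → ℝ) (fXY : ℝ → ℝ → ℝ) (s0 s1 b M δ : ℝ)
    (hG1 : CondG1 fXY s0 s1 b M δ) (hiid : IIDLaw2 P X Y fXY)
    (K : ℝ → ℝ) (hK : KernelCondK K)
    (h1 h2 : ℕ → ℝ) (hband : BandG4' h1 h2) :
    ∃ c > (0 : ℝ),
      Tendsto (fun n => P {ω | ∀ x ∈ Set.Ioo s0 s1,
          b ^ 2 * c ≤ phat K h1 X n 0 x ω * phat K h1 X n 2 x ω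
              - (phat K h1 X n 1 x ω) ^ 2})
        atTop (𝓝 1) := by
  obtain ⟨u₀, hu₀⟩ := exists_pos_of_integral_pos (μ := volume) (hK.1.2.2.2.2 ▸ one_pos)
  obtain ⟨k₀, hk₀, c₁, c₂, hc₁, hc₁₂, hKlb⟩ :=
    Function.Even.exists_le_of_abs_mem_Icc hK.1.2.2.1 hK.2.1.continuous hu₀
  obtain ⟨β, hβ, hmass⟩ := hiid.exists_pos_mul_volume_le_measure_preimage hG1
  obtain ⟨ρ, hρ, hρc⟩ : ∃ ρ : ℝ, 0 < ρ ∧ 3 * ρ ≤ c₂ - c₁ :=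
    ⟨(c₂ - c₁) / 3, by linarith, by linarith⟩
  have hb2 : b ^ 2 ≠ 0 := pow_ne_zero 2 hG1.hb.ne'
  refine ⟨(β * ρ / 4) ^ 2 * (k₀ ^ 2 * ρ ^ 2) / 2 / b ^ 2, by positivity, ?_⟩
  simp only [mul_div_cancel₀ _ hb2]
  have hlim : Tendsto (fun n : ℕ => ENNReal.ofReal
      (16 * (s1 - s0) / (β * ρ ^ 2) * ((n : ℝ) * h1 n ^ 2)⁻¹)) atTop (𝓝 0) := by
    simpa using ENNReal.tendsto_ofReal ((tendsto_natCast_mul_sq_atTop hband.pos1 hband.to0₁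
      hband.r1).inv_tendsto_atTop.const_mul _)
  exact tendsto_measure_of_tendsto_measure_compl <|
    tendsto_of_tendsto_of_tendsto_of_le_of_le' tendsto_const_nhds hlim (.of_forall fun _ => zero_le)
      (hiid.eventually_measure_compl_le hG1.hs hβ hmass hK.1.2.1 hk₀.le hKlb hc₁ hρ hρc
        hband.pos1 hband.to0₁)
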